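/- Let C be a smooth projective curve, M̄ a stable vector bundle on C with deg(M̄) < 0, and consider an exact sequence 0 → O_C^s → M → M̄ → 0. Suppose F ⊆ M is a subsheaf with μ(F) ≥ μ(M) and F ⊄ O_C^s, let K = F ∩ O_C^s (the kernel of F → M̄) and let N be the image of F in M̄, and assume N ≠ M̄. Then rank(K)/rank(F) > s/(s + rank(M̄)). -/
import Mathlib

/- Statement 9 (Lemma 2.3 key inequality): on a smooth curve C, 0 → O_C^s → M → M̄ → 0 with
M̄ stable of negative degree; F ⊆ M with μ(F) ≥ μ(M), K = ker(F → M̄) ⊆ O_C^s (so deg K ≤ 0),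
N = image of F in M̄ nonzero (F ⊄ O_C^s), and stability gives μ(N) < μ(M̄).
Then rank(K)/rank(F) > s/(s + rank(M̄)).  Note deg M = deg M̄ and μ(M) = deg M̄/(s + rk M̄). -/
theorem kernel_rank_ratio_lower_bound
    (s rkMbar : ℕ) (hs : 0 < s) (hrkMbar : 0 < rkMbar)
    (degMbar : ℤ) (hneg : degMbar < 0)
    (rkF rkK rkN : ℕ) (hrkF : 0 < rkF) (hrkN : 0 < rkN)
    (degF degK degN : ℤ)
    (hrk : rkF = rkK + rkN)
    (hdeg : degF = degK + degN)
    (hK : degK ≤ 0)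
    (hslope : (degMbar : ℚ) / ((s : ℚ) + rkMbar) ≤ (degF : ℚ) / rkF)  -- μ(F) ≥ μ(M)
    (hstab : (degN : ℚ) / rkN < (degMbar : ℚ) / rkMbar) :             -- μ(N) < μ(M̄)
    (s : ℚ) / ((s : ℚ) + rkMbar) < (rkK : ℚ) / rkF := by
  have hsQ : (0:ℚ) < s := by exact_mod_cast hs
  have hmQ : (0:ℚ) < rkMbar := by exact_mod_cast hrkMbar
  have hFQ : (0:ℚ) < rkF := by exact_mod_cast hrkF
  have hNQ : (0:ℚ) < rkN := by exact_mod_cast hrkN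
  have hsm : (0:ℚ) < (s:ℚ) + rkMbar := by linarith
  rw [div_le_div_iff₀ hsm hFQ] at hslope
  rw [div_lt_div_iff₀ hNQ hmQ] at hstab
  rw [div_lt_div_iff₀ hsm hFQ]
  have hrkQ : (rkF:ℚ) = rkK + rkN := by exact_mod_cast hrk
  have hdegQ : (degF:ℚ) = degK + degN := by exact_mod_cast hdeg
  have hKQ : (degK:ℚ) ≤ 0 := by exact_mod_cast hK
  have hnegQ : (degMbar:ℚ) < 0 := by exact_mod_cast hneg
  have hslope' : (degMbar:ℚ) * rkF ≤ (degN:ℚ) * ((s:ℚ) + rkMbar) := by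
    nlinarith [mul_le_mul_of_nonneg_right (show (degF:ℚ) ≤ degN by linarith) hsm.le]
  have h1 : (degMbar:ℚ) * ((rkF:ℚ) * rkMbar) ≤ (degN:ℚ) * (((s:ℚ) + rkMbar) * rkMbar) := by
    nlinarith [mul_le_mul_of_nonneg_right hslope' hmQ.le]
  have h2 : (degN:ℚ) * (((s:ℚ) + rkMbar) * rkMbar) < (degMbar:ℚ) * ((rkN:ℚ) * ((s:ℚ) + rkMbar)) := by
    nlinarith [mul_lt_mul_of_pos_right hstab hsm]
  have key : (rkN:ℚ) * ((s:ℚ) + rkMbar) < (rkF:ℚ) * rkMbar :=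
    (mul_lt_mul_left_of_neg hnegQ).mp (lt_of_le_of_lt h1 h2)
  nlinarith [key]
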